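/- WZ-pair identity for Bailey's theorem: Let a, b be complex numbers and define, for nonnegative integers n and k, F(n,k) = [(a)_k (1−a)_k (1/2)^k / ((b+2n)_k k!)] · [Γ((a+b)/2+n) Γ((1−a+b)/2+n) / (Γ(b/2+n) Γ((1+b)/2+n))] and G(n,k) = F(n,k) · (−2k/(b+2n+k)). Assume b+2n+k ≠ 0 for all nonnegative n, k, b+2n is never a nonpositive integer, and all Gamma values involved are nonzero and finite. Then for all nonnegative integers n and k: F(n,k) − F(n+1,k) = G(n,k+1) − G(n,k). -/
import Mathlib
set_option maxHeartbeats 1000000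

open Complex Finset Filter Topology

noncomputable def poch (x : ℂ) (k : ℕ) : ℂ := (ascPochhammer ℂ k).eval x

noncomputable def baileyF (a b : ℂ) (n k : ℕ) : ℂ :=
  poch a k * poch (1 - a) k * (1 / 2 : ℂ) ^ k /
    (poch (b + 2 * n) k * (Nat.factorial k : ℂ)) *
  (Gamma ((a + b) / 2 + n) * Gamma ((1 - a + b) / 2 + n) /
    (Gamma (b / 2 + n) * Gamma ((1 + b) / 2 + n)))

noncomputable def baileyG (a b : ℂ) (n k : ℕ) : ℂ :=
  baileyF a b n k * (-2 * k / (b + 2 * n + k))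

lemma poch_succ (x : ℂ) (k : ℕ) : poch x (k + 1) = poch x k * (x + k) := by
  simp [poch, ascPochhammer_succ_eval]

lemma poch_shift2 (x : ℂ) (k : ℕ) :
    x * (x + 1) * poch (x + 2) k = poch x k * (x + k) * (x + k + 1) := by
  induction k with
  | zero => simp only [poch, ascPochhammer_zero, Polynomial.eval_one, Nat.cast_zero]; ring
  | succ k ih =>
    rw [poch_succ, poch_succ]
    push_cast
    calc x * (x+1) * (poch (x+2) k * (x + 2 + k))
        = x * (x+1) * poch (x+2) k * (x + 2 + k) := by ring
      _ = poch x k * (x + k) * (x + k + 1) * (x + 2 + k) := by rw [ih]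
      _ = poch x k * (x + k) * (x + (k+1)) * (x + (k+1) + 1) := by ring

lemma poch_ne_zero {x : ℂ} (k : ℕ) (h : ∀ m : ℕ, x ≠ -(m : ℂ)) : poch x k ≠ 0 := by
  induction k with
  | zero => simp [poch]
  | succ k ih =>
    rw [poch_succ]
    refine mul_ne_zero ih ?_
    intro hx
    exact h k (by linear_combination hx)

lemma gen_cancel (X D Y Z : ℂ) (hD : D ≠ 0) (hZ : Z ≠ 0) :
    X / D * (Y / Z) * (D * Z) = X * Y := by
  field_simp

/-- WZ-pair identity for Bailey's theorem:
`F(n,k) - F(n+1,k) = G(n,k+1) - G(n,k)`. -/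
theorem bailey_WZ_pair (a b : ℂ)
    (h0 : ∀ n k : ℕ, b + 2 * (n : ℂ) + (k : ℂ) ≠ 0)
    (h1 : ∀ n m : ℕ, b + 2 * (n : ℂ) ≠ -(m : ℂ))
    (h2 : ∀ n : ℕ, Gamma ((a + b) / 2 + (n : ℂ)) ≠ 0)
    (h3 : ∀ n : ℕ, Gamma ((1 - a + b) / 2 + (n : ℂ)) ≠ 0)
    (h4 : ∀ n : ℕ, Gamma (b / 2 + (n : ℂ)) ≠ 0)
    (h5 : ∀ n : ℕ, Gamma ((1 + b) / 2 + (n : ℂ)) ≠ 0) :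
    ∀ n k : ℕ,
      baileyF a b n k - baileyF a b (n + 1) k
        = baileyG a b n (k + 1) - baileyG a b n k := by
  intro n k
  -- Gamma recurrences
  have e2 : Gamma ((a + b) / 2 + ((n : ℂ) + 1))
      = ((a + b) / 2 + n) * Gamma ((a + b) / 2 + n) := by
    rw [show (a + b) / 2 + ((n : ℂ) + 1) = ((a + b) / 2 + n) + 1 by ring]
    exact Gamma_add_one _ (fun h => h2 n (h ▸ Gamma_zero))
  have e3 : Gamma ((1 - a + b) / 2 + ((n : ℂ) + 1))
      = ((1 - a + b) / 2 + n) * Gamma ((1 - a + b) / 2 + n) := by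
    rw [show (1 - a + b) / 2 + ((n : ℂ) + 1) = ((1 - a + b) / 2 + n) + 1 by ring]
    exact Gamma_add_one _ (fun h => h3 n (h ▸ Gamma_zero))
  have e4 : Gamma (b / 2 + ((n : ℂ) + 1))
      = (b / 2 + n) * Gamma (b / 2 + n) := by
    rw [show b / 2 + ((n : ℂ) + 1) = (b / 2 + n) + 1 by ring]
    exact Gamma_add_one _ (fun h => h4 n (h ▸ Gamma_zero))
  have e5 : Gamma ((1 + b) / 2 + ((n : ℂ) + 1))
      = ((1 + b) / 2 + n) * Gamma ((1 + b) / 2 + n) := by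
    rw [show (1 + b) / 2 + ((n : ℂ) + 1) = ((1 + b) / 2 + n) + 1 by ring]
    exact Gamma_add_one _ (fun h => h5 n (h ▸ Gamma_zero))
  -- nonzero facts
  have hck : b + 2 * (n : ℂ) + k ≠ 0 := h0 n k
  have hck1 : b + 2 * (n : ℂ) + k + 1 ≠ 0 := by
    intro h; apply h0 n (k + 1); push_cast; linear_combination h
  have hq : poch (b + 2 * (n : ℂ)) k ≠ 0 := poch_ne_zero k (h1 n)
  have hq2 : poch (b + 2 * (n : ℂ) + 2) k ≠ 0 := by
    refine poch_ne_zero k (fun m => ?_)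
    intro h; apply h1 (n + 1) m; push_cast; linear_combination h
  have hqk1 : poch (b + 2 * (n : ℂ)) (k + 1) ≠ 0 := poch_ne_zero (k + 1) (h1 n)
  have hfac : (Nat.factorial k : ℂ) ≠ 0 := Nat.cast_ne_zero.mpr (Nat.factorial_ne_zero k)
  have hfac1 : (Nat.factorial (k + 1) : ℂ) ≠ 0 := Nat.cast_ne_zero.mpr (Nat.factorial_ne_zero (k + 1))
  have hg2 := h2 n; have hg3 := h3 n; have hg4 := h4 n; have hg5 := h5 n
  have hb2 : b / 2 + (n : ℂ) ≠ 0 := fun h => h4 n (h ▸ Gamma_zero)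
  have hb21 : (1 + b) / 2 + (n : ℂ) ≠ 0 := fun h => h5 n (h ▸ Gamma_zero)
  have hc0 : b + 2 * (n : ℂ) ≠ 0 := by simpa using h1 n 0
  have hc1 : b + 2 * (n : ℂ) + 1 ≠ 0 := by
    intro h; apply h1 n 1; push_cast; linear_combination h
  have hk1 : ((k : ℂ) + 1) ≠ 0 := Nat.cast_add_one_ne_zero k
  have hsh := poch_shift2 (b + 2 * (n : ℂ)) k
  -- inverses of the baileyG denominators
  obtain ⟨u, iu⟩ : ∃ x, (b + 2 * (n : ℂ) + k) * x = 1 := ⟨_, mul_inv_cancel₀ hck⟩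
  obtain ⟨v, iv⟩ : ∃ x, (b + 2 * (n : ℂ) + k + 1) * x = 1 := ⟨_, mul_inv_cancel₀ hck1⟩
  -- product-form representations
  have repF0 : baileyF a b n k *
      ((poch (b + 2 * (n : ℂ)) k * (Nat.factorial k : ℂ)) *
        (Gamma (b / 2 + (n : ℂ)) * Gamma ((1 + b) / 2 + (n : ℂ))))
      = poch a k * poch (1 - a) k * (1 / 2 : ℂ) ^ k *
        (Gamma ((a + b) / 2 + (n : ℂ)) * Gamma ((1 - a + b) / 2 + (n : ℂ))) := by
    rw [baileyF]
    exact gen_cancel _ _ _ _ (mul_ne_zero hq hfac) (mul_ne_zero hg4 hg5)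
  have repFk1 : baileyF a b n (k + 1) *
      ((poch (b + 2 * (n : ℂ)) (k + 1) * (Nat.factorial (k + 1) : ℂ)) *
        (Gamma (b / 2 + (n : ℂ)) * Gamma ((1 + b) / 2 + (n : ℂ))))
      = poch a (k + 1) * poch (1 - a) (k + 1) * (1 / 2 : ℂ) ^ (k + 1) *
        (Gamma ((a + b) / 2 + (n : ℂ)) * Gamma ((1 - a + b) / 2 + (n : ℂ))) := by
    rw [baileyF]
    exact gen_cancel _ _ _ _ (mul_ne_zero hqk1 hfac1) (mul_ne_zero hg4 hg5)
  rw [poch_succ, poch_succ, poch_succ, pow_succ,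
    show ((Nat.factorial (k + 1) : ℂ)) = ((k : ℂ) + 1) * (Nat.factorial k : ℂ) by
      rw [Nat.factorial_succ]; push_cast; ring] at repFk1
  have repF1 : baileyF a b (n + 1) k *
      ((poch (b + 2 * (n : ℂ) + 2) k * (Nat.factorial k : ℂ)) *
        ((b / 2 + (n : ℂ)) * Gamma (b / 2 + (n : ℂ)) *
          (((1 + b) / 2 + (n : ℂ)) * Gamma ((1 + b) / 2 + (n : ℂ)))))
      = poch a k * poch (1 - a) k * (1 / 2 : ℂ) ^ k *
        (((a + b) / 2 + (n : ℂ)) * Gamma ((a + b) / 2 + (n : ℂ)) *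
          (((1 - a + b) / 2 + (n : ℂ)) * Gamma ((1 - a + b) / 2 + (n : ℂ)))) := by
    rw [baileyF]
    rw [show (((n : ℕ) + 1 : ℕ) : ℂ) = (n : ℂ) + 1 by push_cast; ring]
    rw [show b + 2 * ((n : ℂ) + 1) = b + 2 * (n : ℂ) + 2 by ring]
    rw [e2, e3, e4, e5]
    exact gen_cancel _ _ _ _ (mul_ne_zero hq2 hfac)
      (mul_ne_zero (mul_ne_zero hb2 hg4) (mul_ne_zero hb21 hg5))
  -- the key multiplied-out identity
  have key : (baileyF a b n k - baileyF a b (n + 1) k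
        - (baileyF a b n (k + 1) * (-2 * ((k : ℂ) + 1) * v)
            - baileyF a b n k * (-2 * (k : ℂ) * u))) *
      (poch (b + 2 * (n : ℂ)) k * poch (b + 2 * (n : ℂ) + 2) k * (Nat.factorial k : ℂ) *
        Gamma (b / 2 + (n : ℂ)) * Gamma ((1 + b) / 2 + (n : ℂ)) *
        (b + 2 * (n : ℂ)) * (b + 2 * (n : ℂ) + 1) * (b + 2 * (n : ℂ) + k) * ((k : ℂ) + 1)) = 0 := by
    set c : ℂ := b + 2 * (n : ℂ) with hcdef
    set T : ℂ := poch a k * poch (1 - a) k * (1 / 2 : ℂ) ^ k *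
      (Gamma ((a + b) / 2 + (n : ℂ)) * Gamma ((1 - a + b) / 2 + (n : ℂ))) with hT
    set X : ℂ := (a + (k : ℂ)) * (1 - a + (k : ℂ)) with hX
    linear_combination
      (poch (c + 2) k * c * (c + 1) * (c + (k : ℂ)) * ((k : ℂ) + 1) * (1 - 2 * (k : ℂ) * u)) * repF0
      + (-4 * poch c k * (c + (k : ℂ)) * ((k : ℂ) + 1)) * repF1
      + (2 * ((k : ℂ) + 1) * v * poch (c + 2) k * c * (c + 1)) * repFk1
      + (T * (c + (k : ℂ)) * ((k : ℂ) + 1) * (1 - 2 * (k : ℂ) * u)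
          + ((k : ℂ) + 1) * v * X * T) * hsh
      + (((k : ℂ) + 1) * X * T * poch c k * (c + (k : ℂ))) * iv
      + (-2 * (k : ℂ) * T * poch c k * (c + (k : ℂ)) * (c + (k : ℂ) + 1) * ((k : ℂ) + 1)) * iu
  have hW : (poch (b + 2 * (n : ℂ)) k * poch (b + 2 * (n : ℂ) + 2) k * (Nat.factorial k : ℂ) *
        Gamma (b / 2 + (n : ℂ)) * Gamma ((1 + b) / 2 + (n : ℂ)) *
        (b + 2 * (n : ℂ)) * (b + 2 * (n : ℂ) + 1) * (b + 2 * (n : ℂ) + k) * ((k : ℂ) + 1)) ≠ 0 := by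
    exact mul_ne_zero (mul_ne_zero (mul_ne_zero (mul_ne_zero (mul_ne_zero (mul_ne_zero
      (mul_ne_zero (mul_ne_zero hq hq2) hfac) hg4) hg5) hc0) hc1) hck) hk1
  have key2 := sub_eq_zero.mp ((mul_eq_zero.mp key).resolve_right hW)
  -- finish
  rw [baileyG, baileyG]
  rw [show (((k : ℕ) + 1 : ℕ) : ℂ) = (k : ℂ) + 1 by push_cast; ring]
  rw [show -2 * ((k : ℂ) + 1) / (b + 2 * (n : ℂ) + ((k : ℂ) + 1)) = -2 * ((k : ℂ) + 1) * v by
    rw [show b + 2 * (n : ℂ) + ((k : ℂ) + 1) = b + 2 * (n : ℂ) + (k : ℂ) + 1 by ring,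
      div_eq_iff hck1]; linear_combination (2 * ((k : ℂ) + 1)) * iv]
  rw [show -2 * (k : ℂ) / (b + 2 * (n : ℂ) + (k : ℂ)) = -2 * (k : ℂ) * u by
    rw [div_eq_iff hck]; linear_combination (2 * (k : ℂ)) * iu]
  linear_combination key2
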